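/- In a port-labeled connected graph where each vertex v assigns distinct ports {0,...,deg(v)-1} to its incident edges, the standard DFS rule 'on entering via port p in explore state, exit via port (p+1) mod deg(v); backtrack when the exit port equals the entry/parent port' traverses every edge of the graph, i.e., visits every vertex, when run on a static graph. -/

import Mathlib

/-- A port-labeled simple graph: each vertex `v` has degree `deg v`, and its
incident edges are labeled by distinct ports `0, …, deg v - 1`.  `nxt v p` is
the neighbour of `v` reached through port `p`, and `rev v p` is the port
through which that neighbour sees `v` (the entry port at the other end). -/
structure PortGraph (V : Type*) where
  deg : V → ℕ
  nxt : V → ℕ → V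
  rev : V → ℕ → ℕ
  rev_lt : ∀ v p, p < deg v → rev v p < deg (nxt v p)
  nxt_rev : ∀ v p, p < deg v → nxt (nxt v p) (rev v p) = v
  rev_rev : ∀ v p, p < deg v → rev (nxt v p) (rev v p) = p
  nxt_ne : ∀ v p, p < deg v → nxt v p ≠ v
  nxt_inj : ∀ v p q, p < deg v → q < deg v → nxt v p = nxt v q → p = q

/-- The state of the DFS agent: current vertex, the port through which it
entered the current vertex, whether it is in the `explore` state (otherwise it
is backtracking), and for each visited vertex the recorded parent port. -/
structure DFSState (V : Type*) where
  cur : V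
  pin : ℕ
  explore : Bool
  parent : V → Option ℕ

/-- One step of the standard port-based DFS rule: at a newly visited vertex,
record the entry port as parent and exit via port `(pin+1) mod deg`
(switching to backtrack if the exit port equals the entry port); at an
already-visited vertex in explore state, immediately backtrack via the entry
port; in backtrack state, exit via `(pin+1) mod deg`, staying in backtrack
exactly when the exit port equals the parent port. -/
def dfsStep {V : Type*} [DecidableEq V] (P : PortGraph V) (s : DFSState V) :
    DFSState V :=
  let v := s.cur
  if s.explore then
    match s.parent v with
    | none =>
      let pout := (s.pin + 1) % P.deg v
      { cur := P.nxt v pout, pin := P.rev v pout,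
        explore := pout ≠ s.pin,
        parent := fun w => if w = v then some s.pin else s.parent w }
    | some _ =>
      { cur := P.nxt v s.pin, pin := P.rev v s.pin,
        explore := false, parent := s.parent }
  else
    let pout := (s.pin + 1) % P.deg v
    { cur := P.nxt v pout, pin := P.rev v pout,
      explore := s.parent v ≠ some pout, parent := s.parent }

/-- The run of the DFS agent from an initial state. -/
def dfsRun {V : Type*} [DecidableEq V] (P : PortGraph V) (s₀ : DFSState V) :
    ℕ → DFSState V
  | 0 => s₀
  | n + 1 => dfsStep P (dfsRun P s₀ (n + 1 - 1))


/-!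
An excursion that enters a vertex `w` in explore mode through port `q` always comes back across
the same edge in backtrack mode. If `w` is already visited (has a parent port) the agent bounces
back at once; otherwise it records `q` and sweeps the ports `q + 1, q + 2, …` of `w` cyclically,
each exit starting an excursion that comes back, until the next port is `q` again. Every
excursion spawned at `w` starts with fewer unvisited vertices, which gives the induction.

Hence every neighbour of a vertex the agent stands on is eventually reached: a visited vertex was
swept when it was first entered, and a vertex that is never visited can only be occupied in
backtrack mode (the root's recorded parent port `deg r - 1` is fictitious, so the agent may leave
the root backtracking towards an unvisited vertex), from where the agent sweeps all of its ports.
Connectivity finishes the proof.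
-/

theorem Nat.add_mod_ne_self {n q j : ℕ} (hq : q < n) (hj : 0 < j) (hjn : j < n) :
    (q + j) % n ≠ q := by
  rcases lt_or_ge (q + j) n with h | h
  · rw [Nat.mod_eq_of_lt h]; omega
  · rw [Nat.mod_eq_sub_mod h, Nat.mod_eq_of_lt (by omega)]; omega

theorem Nat.exists_add_mod_eq {n p p' : ℕ} (hp : p < n) (hp' : p' < n) :
    ∃ j, 0 < j ∧ j ≤ n ∧ (p + j) % n = p' := by
  rcases lt_or_ge p p' with h | h
  · exact ⟨p' - p, by omega, by omega, by rw [Nat.add_sub_cancel' h.le, Nat.mod_eq_of_lt hp']⟩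
  · refine ⟨p' + n - p, by omega, by omega, ?_⟩
    rw [show p + (p' + n - p) = p' + n by omega, Nat.add_mod_right, Nat.mod_eq_of_lt hp']

section Step

variable {V : Type*} [DecidableEq V] (P : PortGraph V)

abbrev DFSReach : DFSState V → DFSState V → Prop :=
  Relation.ReflTransGen fun s t => dfsStep P s = t

-- Exploring an unvisited vertex is the backtrack step of the state in which it is already visited
-- (`dfsStep_discover`), so a single sweep lemma covers both situations.
@[simps]
def DFSState.discover (s : DFSState V) : DFSState V :=
  ⟨s.cur, s.pin, false, Function.update s.parent s.cur (some s.pin)⟩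

variable {P} {s t : DFSState V}

theorem dfsStep_of_backtrack (he : s.explore = false) :
    dfsStep P s = ⟨P.nxt s.cur ((s.pin + 1) % P.deg s.cur),
      P.rev s.cur ((s.pin + 1) % P.deg s.cur),
      decide (s.parent s.cur ≠ some ((s.pin + 1) % P.deg s.cur)), s.parent⟩ := by
  simp [dfsStep, he]

theorem dfsStep_of_revisit {x : ℕ} (he : s.explore = true) (hp : s.parent s.cur = some x) :
    dfsStep P s = ⟨P.nxt s.cur s.pin, P.rev s.cur s.pin, false, s.parent⟩ := by
  simp [dfsStep, he, hp]

theorem dfsStep_discover (he : s.explore = true) (hp : s.parent s.cur = none) :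
    dfsStep P s.discover = dfsStep P s := by
  simp [dfsStep, he, hp, eq_comm]
  exact funext fun w => Function.update_apply _ _ _ _

theorem dfsStep_parent {v : V} :
    (dfsStep P s).parent v = if s.explore = true ∧ s.parent s.cur = none ∧ v = s.cur
      then some s.pin else s.parent v := by
  cases he : s.explore
  · simp [dfsStep_of_backtrack he]
  · cases hp : s.parent s.cur with
    | none =>
      rw [← dfsStep_discover he hp, dfsStep_of_backtrack rfl]
      simp [Function.update_apply]
    | some x => simp [dfsStep_of_revisit he hp]

theorem pin_lt_deg_dfsStep (h : s.pin < P.deg s.cur) :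
    (dfsStep P s).pin < P.deg (dfsStep P s).cur := by
  have hpos : 0 < P.deg s.cur := by omega
  have hmod := Nat.mod_lt (s.pin + 1) hpos
  cases he : s.explore
  · rw [dfsStep_of_backtrack he]; exact P.rev_lt _ _ hmod
  · cases hp : s.parent s.cur with
    | none => rw [← dfsStep_discover he hp, dfsStep_of_backtrack rfl]; exact P.rev_lt _ _ hmod
    | some x => rw [dfsStep_of_revisit he hp]; exact P.rev_lt _ _ h

theorem DFSReach.dfsStep (h : DFSReach P s t) : DFSReach P (dfsStep P s) (dfsStep P t) :=
  h.lift _ fun _ _ hab => hab ▸ rfl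

theorem DFSReach.parent_eq_some {v : V} {x : ℕ} (h : DFSReach P s t)
    (hs : s.parent v = some x) : t.parent v = some x := by
  induction h with
  | refl => exact hs
  | tail _ hstep ih =>
    rw [← hstep, dfsStep_parent, if_neg]
    · exact ih
    · rintro ⟨-, hnone, rfl⟩
      simp [hnone] at ih

theorem DFSReach.pin_lt_deg (h : DFSReach P s t) (hs : s.pin < P.deg s.cur) :
    t.pin < P.deg t.cur := by
  induction h with
  | refl => exact hs
  | tail _ hstep ih => exact hstep ▸ pin_lt_deg_dfsStep ih

theorem DFSReach.exists_discovery {v : V} (h : DFSReach P s t) (hs : s.parent v = none)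
    (ht : t.parent v ≠ none) :
    ∃ u, DFSReach P s u ∧ u.cur = v ∧ u.explore = true ∧ u.parent v = none := by
  induction h with
  | refl => exact absurd hs ht
  | @tail u _ hsu hstep ih =>
    by_cases hu : u.parent v = none
    · rw [← hstep, dfsStep_parent] at ht
      split_ifs at ht with hnew
      · exact ⟨u, hsu, hnew.2.2.symm, hnew.1, hu⟩
      · exact absurd hu ht
    · exact ih hu

theorem DFSReach.exists_dfsRun_eq (h : DFSReach P s t) : ∃ n, dfsRun P s n = t := by
  induction h with
  | refl => exact ⟨0, rfl⟩
  | tail _ hstep ih =>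
    obtain ⟨n, rfl⟩ := ih
    exact ⟨n + 1, hstep⟩

end Step

section Sweep

variable {V : Type*} [DecidableEq V] {P : PortGraph V} {s : DFSState V}

def ExcursionReturns (P : PortGraph V) (s : DFSState V) : Prop :=
  s.explore = true → s.pin < P.deg s.cur →
    ∃ t, DFSReach P s t ∧ t.cur = P.nxt s.cur s.pin ∧ t.pin = P.rev s.cur s.pin ∧
      t.explore = false

theorem exists_backtrack_of_excursion (he : s.explore = false) (hp : s.pin < P.deg s.cur)
    (hpar : s.parent s.cur ≠ some ((s.pin + 1) % P.deg s.cur))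
    (hret : ExcursionReturns P (dfsStep P s)) :
    ∃ t, DFSReach P (dfsStep P s) t ∧ t.cur = s.cur ∧ t.explore = false ∧
      t.pin = (s.pin + 1) % P.deg s.cur := by
  have hout := Nat.mod_lt (s.pin + 1) (show 0 < P.deg s.cur by omega)
  have hstep := dfsStep_of_backtrack (P := P) he
  obtain ⟨t, hst, hcur, hpin, hback⟩ :=
    hret (by simp [hstep, hpar]) (by simp [hstep, P.rev_lt _ _ hout])
  simp only [hstep] at hcur hpin
  exact ⟨t, hst, hcur.trans (P.nxt_rev _ _ hout), hback, hpin.trans (P.rev_rev _ _ hout)⟩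

theorem exists_backtrack_of_sweep (he : s.explore = false) (hp : s.pin < P.deg s.cur)
    (hret : ∀ t, DFSReach P s t → ExcursionReturns P t) (k : ℕ)
    (hk : ∀ t, DFSReach P s t → ∀ j, 0 < j → j ≤ k →
      t.parent s.cur ≠ some ((s.pin + j) % P.deg s.cur)) :
    ∃ t, DFSReach P s t ∧ t.cur = s.cur ∧ t.explore = false ∧
      t.pin = (s.pin + k) % P.deg s.cur := by
  induction k with
  | zero => exact ⟨s, .refl, rfl, he, (Nat.mod_eq_of_lt hp).symm⟩
  | succ k ih =>
    obtain ⟨t, hst, hcur, het, hpin⟩ := ih fun t ht j hj hjk => hk t ht j hj (by omega)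
    have hnext : (t.pin + 1) % P.deg t.cur = (s.pin + (k + 1)) % P.deg s.cur := by
      rw [hpin, hcur, Nat.mod_add_mod, add_assoc]
    obtain ⟨u, htu, hu⟩ := exists_backtrack_of_excursion het
      (by rw [hpin, hcur]; exact Nat.mod_lt _ (by omega))
      (by rw [hnext, hcur]; exact hk t hst (k + 1) k.succ_pos le_rfl)
      (hret _ (hst.tail rfl))
    rw [hnext, hcur] at hu
    exact ⟨u, (hst.tail rfl).trans htu, hu⟩

theorem exists_reach_nxt_of_sweep (he : s.explore = false) (hp : s.pin < P.deg s.cur)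
    (hret : ∀ t, DFSReach P s t → ExcursionReturns P t)
    (hk : ∀ t, DFSReach P s t → ∀ j, 0 < j → j < P.deg s.cur →
      t.parent s.cur ≠ some ((s.pin + j) % P.deg s.cur))
    {p : ℕ} (hp' : p < P.deg s.cur) :
    ∃ t, DFSReach P (dfsStep P s) t ∧ t.cur = P.nxt s.cur p := by
  obtain ⟨j, hj, hjn, rfl⟩ := Nat.exists_add_mod_eq hp hp'
  obtain ⟨t, hst, hcur, het, hpin⟩ := exists_backtrack_of_sweep he hp hret (j - 1)
    fun t ht i hi hij => hk t ht i hi (by omega)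
  refine ⟨dfsStep P t, hst.dfsStep, ?_⟩
  rw [dfsStep_of_backtrack het, hpin, hcur, Nat.mod_add_mod, add_assoc, Nat.sub_add_cancel hj]

theorem DFSReach.parent_ne_of_discover {t : DFSState V} (ht : DFSReach P s.discover t)
    (hp : s.pin < P.deg s.cur) {j : ℕ} (hj : 0 < j) (hjn : j < P.deg s.cur) :
    t.parent s.discover.cur ≠ some ((s.discover.pin + j) % P.deg s.discover.cur) := by
  rw [DFSState.discover_cur, DFSState.discover_pin, ht.parent_eq_some (Function.update_self ..),
    Ne, Option.some_inj]
  exact (Nat.add_mod_ne_self hp hj hjn).symm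

theorem exists_reach_nxt_of_discovery (he : s.explore = true) (hnew : s.parent s.cur = none)
    (hp : s.pin < P.deg s.cur) (hret : ∀ t, DFSReach P s.discover t → ExcursionReturns P t)
    {p : ℕ} (hp' : p < P.deg s.cur) :
    ∃ t, DFSReach P s t ∧ t.cur = P.nxt s.cur p := by
  obtain ⟨t, hst, hcur⟩ := exists_reach_nxt_of_sweep (s := s.discover) rfl hp hret
    (fun _ ht _ hj hjn => ht.parent_ne_of_discover hp hj hjn) hp'
  rw [dfsStep_discover he hnew] at hst
  exact ⟨t, .head rfl hst, hcur⟩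

end Sweep

section Finite

variable {V : Type*} [Fintype V] [DecidableEq V] {P : PortGraph V} {s t : DFSState V}

def DFSState.unvisited (s : DFSState V) : Finset V :=
  Finset.univ.filter fun v => s.parent v = none

theorem DFSReach.unvisited_subset (h : DFSReach P s t) : t.unvisited ⊆ s.unvisited := by
  intro v hv
  simp only [DFSState.unvisited, Finset.mem_filter, Finset.mem_univ, true_and] at hv ⊢
  cases hs : s.parent v with
  | none => rfl
  | some x => simp [h.parent_eq_some hs] at hv

theorem DFSState.unvisited_discover_ssubset (hnew : s.parent s.cur = none) :
    s.discover.unvisited ⊂ s.unvisited := by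
  refine Finset.ssubset_iff_of_subset (fun v hv => ?_) |>.mpr ⟨s.cur, ?_, ?_⟩
  · simp only [unvisited, Finset.mem_filter, Finset.mem_univ, true_and, discover_parent] at hv ⊢
    rwa [Function.update_of_ne (by rintro rfl; simp at hv)] at hv
  · simpa [unvisited] using hnew
  · simp [unvisited]

theorem excursionReturns (s : DFSState V) : ExcursionReturns P s := by
  induction hn : s.unvisited.card using Nat.strong_induction_on generalizing s with
  | _ n ih =>
  intro he hp
  cases hnew : s.parent s.cur with
  | some x => exact ⟨dfsStep P s, .single rfl, by simp [dfsStep_of_revisit he hnew]⟩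
  | none =>
    have hret (t) (ht : DFSReach P s.discover t) : ExcursionReturns P t :=
      ih _ (hn ▸ Finset.card_lt_card (ht.unvisited_subset.trans_ssubset
        (DFSState.unvisited_discover_ssubset hnew))) t rfl
    obtain ⟨t, hst, hcur, het, hpin⟩ := exists_backtrack_of_sweep (s := s.discover) rfl hp hret
      (P.deg s.cur - 1) fun _ ht _ hj hjn => ht.parent_ne_of_discover hp hj (by omega)
    simp only [DFSState.discover_cur, DFSState.discover_pin] at hcur hpin
    have hlast : (t.pin + 1) % P.deg t.cur = s.pin := by
      rw [hpin, hcur, Nat.mod_add_mod, add_assoc, Nat.sub_add_cancel (by omega),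
        Nat.add_mod_right, Nat.mod_eq_of_lt hp]
    refine ⟨dfsStep P t, .head rfl ((dfsStep_discover he hnew) ▸ hst.dfsStep), ?_⟩
    rw [dfsStep_of_backtrack het, hlast, hcur]
    simp [hst.parent_eq_some (Function.update_self ..)]

theorem DFSReach.exists_reach_nxt {s₀ : DFSState V} (hs₀ : ∀ v, s₀.parent v = none)
    (hpin₀ : s₀.pin < P.deg s₀.cur) (ht : DFSReach P s₀ t) {p : ℕ} (hp : p < P.deg t.cur) :
    ∃ u, DFSReach P s₀ u ∧ u.cur = P.nxt t.cur p := by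
  by_cases hvis : ∃ u, DFSReach P s₀ u ∧ u.parent t.cur ≠ none
  · obtain ⟨u, hu, hne⟩ := hvis
    obtain ⟨d, hd, hcur, he, hnew⟩ := hu.exists_discovery (hs₀ _) hne
    obtain ⟨u, hdu, hu⟩ := exists_reach_nxt_of_discovery he (hcur ▸ hnew)
      (hd.pin_lt_deg hpin₀) (fun _ _ => excursionReturns _) (hcur ▸ hp)
    exact ⟨u, hd.trans hdu, hcur ▸ hu⟩
  · push Not at hvis
    have het : t.explore = false := by
      by_contra he
      have := hvis _ (ht.tail rfl)
      rw [dfsStep_parent, if_pos ⟨by simpa using he, hvis t ht, rfl⟩] at this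
      simp at this
    obtain ⟨u, htu, hu⟩ := exists_reach_nxt_of_sweep het (ht.pin_lt_deg hpin₀)
      (fun _ _ => excursionReturns _)
      (fun u htu _ _ _ => by rw [hvis u (ht.trans htu)]; simp) hp
    exact ⟨u, (ht.tail rfl).trans htu, hu⟩

end Finite

theorem dfs_visits_all_general {V : Type*} [Fintype V] [DecidableEq V]
    (P : PortGraph V)
    (hconn : ∀ r v : V, Relation.ReflTransGen
      (fun a b => ∃ p, p < P.deg a ∧ P.nxt a p = b) r v)
    (r : V) :
    ∀ v : V, ∃ n : ℕ,
      (dfsRun P ⟨r, P.deg r - 1, true, fun _ => none⟩ n).cur = v := by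
  intro v
  rcases (P.deg r).eq_zero_or_pos with hr | hr
  · refine ⟨0, ?_⟩
    rcases (hconn r v).cases_head with rfl | ⟨_, ⟨p, hp, -⟩, -⟩
    · rfl
    · omega
  suffices ∃ t, DFSReach P ⟨r, P.deg r - 1, true, fun _ => none⟩ t ∧ t.cur = v by
    obtain ⟨t, ht, rfl⟩ := this
    obtain ⟨n, rfl⟩ := ht.exists_dfsRun_eq
    exact ⟨n, rfl⟩
  induction hconn r v with
  | refl => exact ⟨_, .refl, rfl⟩
  | tail _ hedge ih =>
    obtain ⟨t, ht, rfl⟩ := ih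
    obtain ⟨p, hp, rfl⟩ := hedge
    exact ht.exists_reach_nxt (fun _ => rfl) (by simp only; omega) hp

/-- On a finite connected port-labeled static graph, the standard DFS rule
started at a root `r` (with first exit port `0`) visits every vertex. -/
theorem dfs_visits_all {V : Type*} [Fintype V] [DecidableEq V]
    (P : PortGraph V) (hdeg : ∀ v, 0 < P.deg v)
    (hconn : ∀ r v : V, Relation.ReflTransGen
      (fun a b => ∃ p, p < P.deg a ∧ P.nxt a p = b) r v)
    (r : V) :
    ∀ v : V, ∃ n : ℕ,
      (dfsRun P ⟨r, P.deg r - 1, true, fun _ => none⟩ n).cur = v :=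
  dfs_visits_all_general P hconn r
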